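/- Let E = I + H be a skew left brace which is a reduced product of an ideal I and a sub-skew brace H (i.e., E = I + H and no proper sub-skew brace of H supplements I). Then I ∩ H ≤ Φ(H), the Frattini sub-skew brace of H. -/
import Mathlib


/-- A skew left brace: a set with two group structures `(A, +)` and `(A, ∘)`
(here `∘` is `circ`, with inverse `sinv`) satisfying
`a ∘ (b + c) = (a ∘ b) - a + (a ∘ c)`. -/
class SkewBrace (A : Type*) extends AddGroup A where
  circ : A → A → A
  circ_assoc : ∀ a b c : A, circ (circ a b) c = circ a (circ b c)
  zero_circ : ∀ a : A, circ 0 a = a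
  circ_zero : ∀ a : A, circ a 0 = a
  sinv : A → A
  circ_sinv : ∀ a : A, circ a (sinv a) = 0
  sinv_circ : ∀ a : A, circ (sinv a) a = 0
  compat : ∀ a b c : A, circ a (b + c) = circ a b + -a + circ a c

namespace SkewBrace

variable {A : Type*} [SkewBrace A]

/-- The lambda map `λ_a(b) = -a + (a ∘ b)`. -/
def lam (a b : A) : A := -a + circ a b

/-- `S` is (the carrier of) a sub-skew brace: a subgroup of both `(A,+)` and `(A,∘)`. -/
def IsSub (S : Set A) : Prop :=
  (0 : A) ∈ S ∧ (∀ a ∈ S, ∀ b ∈ S, a + b ∈ S) ∧ (∀ a ∈ S, -a ∈ S) ∧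
    (∀ a ∈ S, ∀ b ∈ S, circ a b ∈ S) ∧ (∀ a ∈ S, sinv a ∈ S)

/-- `S` is (the carrier of) an ideal: a sub-skew brace normal in both group
structures and invariant under all `λ_a`. -/
def IsIdeal (S : Set A) : Prop :=
  IsSub S ∧ (∀ a : A, ∀ x ∈ S, -a + x + a ∈ S) ∧
    (∀ a : A, ∀ x ∈ S, circ (sinv a) (circ x a) ∈ S) ∧
    (∀ a : A, ∀ x ∈ S, lam a x ∈ S)

/-- A skew brace homomorphism: preserves both operations. -/
def IsHom {B : Type*} [SkewBrace B] (f : A → B) : Prop :=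
  (∀ x y : A, f (x + y) = f x + f y) ∧ ∀ x y : A, f (circ x y) = circ (f x) (f y)

/-- Multiplication of the semidirect product group `Λ_A = (A,+) ⋊_λ (A,∘)`. -/
def lmul (p q : A × A) : A × A := (p.1 + lam p.2 q.1, circ p.2 q.2)

end SkewBrace

open SkewBrace
/-- `M` is a maximal (proper) sub-skew brace of the sub-skew brace with carrier `H`. -/
def SkewBrace.IsMaxSubOf {A : Type*} [SkewBrace A] (M H : Set A) : Prop :=
  IsSub M ∧ M ⊆ H ∧ M ≠ H ∧
    ∀ K : Set A, IsSub K → M ⊆ K → K ⊆ H → K = M ∨ K = H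

namespace SkewBrace

variable {A : Type*} [SkewBrace A]

lemma circ_eq_add_lam (a b : A) : circ a b = a + lam a b := by
  simp [lam]

lemma sinv_circ_rev (a b : A) : sinv (circ a b) = circ (sinv b) (sinv a) := by
  have h : circ (circ (sinv b) (sinv a)) (circ a b) = 0 := by
    rw [circ_assoc, ← circ_assoc (sinv a) a b, sinv_circ, zero_circ, sinv_circ]
  calc sinv (circ a b)
      = circ 0 (sinv (circ a b)) := (zero_circ _).symm
    _ = circ (circ (circ (sinv b) (sinv a)) (circ a b)) (sinv (circ a b)) := by rw [h]
    _ = circ (circ (sinv b) (sinv a)) (circ (circ a b) (sinv (circ a b))) := by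
        rw [circ_assoc]
    _ = circ (sinv b) (sinv a) := by rw [circ_sinv, circ_zero]

lemma circ_neg (a b : A) : circ a (-b) = a + -(circ a b) + a := by
  have h : circ a b + -a + circ a (-b) = a := by
    rw [← compat, add_neg_cancel, circ_zero]
  have := congrArg (fun z => -(circ a b + -a) + z) h
  simpa [neg_add_rev, add_assoc] using this

lemma lam_lam (a b x : A) : lam a (lam b x) = lam (circ a b) x := by
  simp only [lam, compat, circ_neg, circ_assoc]
  simp [add_assoc]

lemma lam_zero_left (x : A) : lam (0 : A) x = x := by simp [lam, zero_circ]

lemma add_eq_circ_lam (m x : A) : m + x = circ m (lam (sinv m) x) := by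
  rw [circ_eq_add_lam, lam_lam, circ_sinv, lam_zero_left]

/-- For `a ∈ I` an ideal, `-b + a ∘ b ∈ I`. -/
lemma ideal_neg_add_circ {I : Set A} (hI : IsIdeal I) {a : A} (ha : a ∈ I) (b : A) :
    -b + circ a b ∈ I := by
  have hy : circ (sinv b) (circ a b) ∈ I := hI.2.2.1 b a ha
  have := hI.2.2.2 b _ hy
  have heq : lam b (circ (sinv b) (circ a b)) = -b + circ a b := by
    rw [lam, ← circ_assoc, circ_sinv, zero_circ]
  rwa [heq] at this

end SkewBrace

/-- in a reduced product `E = I + H`, one has `I ∩ H ≤ Φ(H)`. -/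
theorem stmt_12 {E : Type*} [SkewBrace E] (I H : Set E)
    (hI : IsIdeal I) (hH : IsSub H)
    (hsum : ∀ e : E, ∃ x ∈ I, ∃ h ∈ H, e = x + h)
    (hred : ∀ K : Set E, IsSub K → K ⊆ H →
      (∀ e : E, ∃ x ∈ I, ∃ k ∈ K, e = x + k) → K = H) :
    ∀ a ∈ I ∩ H, ∀ M : Set E, SkewBrace.IsMaxSubOf M H → a ∈ M := by
  rintro a ⟨haI, haH⟩ M hM
  by_contra haM
  -- S = M + I
  set S : Set E := {e | ∃ m ∈ M, ∃ x ∈ I, e = m + x} with hS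
  have hMsub : IsSub M := hM.1
  have hSsub : IsSub S := by
    refine ⟨⟨0, hMsub.1, 0, hI.1.1, by simp⟩, ?_, ?_, ?_, ?_⟩
    · rintro _ ⟨m, hm, x, hx, rfl⟩ _ ⟨m', hm', x', hx', rfl⟩
      refine ⟨m + m', hMsub.2.1 m hm m' hm', (-m' + x + m') + x',
        hI.1.2.1 _ (hI.2.1 m' x hx) x' hx', ?_⟩
      simp [add_assoc]
    · rintro _ ⟨m, hm, x, hx, rfl⟩
      refine ⟨-m, hMsub.2.2.1 m hm, m + -x + -m, ?_, ?_⟩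
      · have := hI.2.1 (-m) (-x) (hI.1.2.2.1 x hx)
        simpa using this
      · simp [add_assoc, neg_add_rev]
    · rintro _ ⟨m, hm, x, hx, rfl⟩ _ ⟨m', hm', x', hx', rfl⟩
      set u := lam (sinv m) x with hu
      have huI : u ∈ I := hI.2.2.2 (sinv m) x hx
      have hdec : m + x = circ m u := add_eq_circ_lam m x
      set w₁ := -m' + circ u m' with hw₁
      have hw₁I : w₁ ∈ I := ideal_neg_add_circ hI huI m'
      have h1 : circ (m + x) m' = circ m m' + lam m w₁ := by
        rw [hdec, circ_assoc]
        have : circ u m' = m' + w₁ := by simp [hw₁, add_assoc]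
        rw [this, compat, circ_eq_add_lam m w₁]
        simp [add_assoc, lam]
      have h2 : circ (m + x) (m' + x') =
          circ m m' + (lam m w₁ + lam (m + x) x') := by
        rw [compat, h1]
        simp [lam, add_assoc]
      exact ⟨circ m m', hMsub.2.2.2.1 m hm m' hm',
        lam m w₁ + lam (m + x) x',
        hI.1.2.1 _ (hI.2.2.2 m w₁ hw₁I) _ (hI.2.2.2 (m + x) x' hx'), h2⟩
    · rintro _ ⟨m, hm, x, hx, rfl⟩
      set u := lam (sinv m) x with hu
      have huI : u ∈ I := hI.2.2.2 (sinv m) x hx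
      have hdec : m + x = circ m u := add_eq_circ_lam m x
      have hrev : sinv (m + x) = circ (sinv u) (sinv m) := by
        rw [hdec, sinv_circ_rev]
      have hsuI : sinv u ∈ I := hI.1.2.2.2.2 u huI
      refine ⟨sinv m, hMsub.2.2.2.2 m hm, -(sinv m) + circ (sinv u) (sinv m),
        ideal_neg_add_circ hI hsuI (sinv m), ?_⟩
      rw [hrev]
      simp [add_assoc]
  -- T = H ∩ S
  set T : Set E := H ∩ S with hT
  have hTsub : IsSub T := by
    refine ⟨⟨hH.1, hSsub.1⟩, ?_, ?_, ?_, ?_⟩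
    · rintro p ⟨hp1, hp2⟩ q ⟨hq1, hq2⟩
      exact ⟨hH.2.1 p hp1 q hq1, hSsub.2.1 p hp2 q hq2⟩
    · rintro p ⟨hp1, hp2⟩
      exact ⟨hH.2.2.1 p hp1, hSsub.2.2.1 p hp2⟩
    · rintro p ⟨hp1, hp2⟩ q ⟨hq1, hq2⟩
      exact ⟨hH.2.2.2.1 p hp1 q hq1, hSsub.2.2.2.1 p hp2 q hq2⟩
    · rintro p ⟨hp1, hp2⟩
      exact ⟨hH.2.2.2.2 p hp1, hSsub.2.2.2.2 p hp2⟩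
  have hMT : M ⊆ T := by
    intro m hm
    exact ⟨hM.2.1 hm, ⟨m, hm, 0, hI.1.1, by simp⟩⟩
  have haT : a ∈ T := ⟨haH, ⟨0, hMsub.1, a, haI, by simp⟩⟩
  have hTH : T ⊆ H := Set.inter_subset_left
  rcases hM.2.2.2 T hTsub hMT hTH with h | h
  · exact haM (h ▸ haT)
  · -- T = H, so H ⊆ S; apply hred with K = M
    have hHS : H ⊆ S := fun p hp => (h.symm ▸ hp : p ∈ T).2
    have : M = H := by
      refine hred M hMsub hM.2.1 ?_
      intro e
      obtain ⟨x₀, hx₀, k, hk, rfl⟩ := hsum e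
      obtain ⟨m, hm, x₁, hx₁, rfl⟩ := hHS hk
      refine ⟨x₀ + (m + x₁ + -m), ?_, m, hm, ?_⟩
      · refine hI.1.2.1 _ hx₀ _ ?_
        have := hI.2.1 (-m) x₁ hx₁
        simpa using this
      · simp [add_assoc]
    exact hM.2.2.1 this
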